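/- arXiv:2507.13342 — 2 statements merged into one kernel-verified Lean document; each statement's English description precedes it below -/
import Mathlib

section
/- Let H ∈ F₂^{m×n} be (δ,γ)-expanding, let 0 < ε < δγ/2 and 0 < ξ < (δ − 2ε/γ)/2. Then every ξ-cluster C of Ω(ε) satisfies |C| ≤ Σ_{i=0}^{⌊2εn/γ⌋} binom(n,i), i.e. the cardinality of each cluster is at most the volume of a Hamming ball of radius ⌊2εn/γ⌋ in F₂ⁿ. -/
open scoped Classical

/-- A binary matrix `H ∈ F₂^{m×n}` is `(δ,γ)`-expanding if every `x ∈ F₂ⁿ`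
with Hamming weight `|x| ≤ δn` satisfies `|Hx| ≥ γ|x|`. -/
def IsExpanding {m n : ℕ} (H : Matrix (Fin m) (Fin n) (ZMod 2)) (δ γ : ℝ) : Prop :=
  ∀ x : Fin n → ZMod 2, (hammingNorm x : ℝ) ≤ δ * n →
    γ * (hammingNorm x : ℝ) ≤ (hammingNorm (H.mulVec x) : ℝ)

/-- `x ∼ y` on `Ω(ε) = {z : |Hz| < εn}`: there is a path `v₀ = x, …, v_ℓ = y`
inside `Ω(ε)` whose consecutive members differ in fewer than `ξn` coordinates.
Its equivalence classes are the ξ-clusters of `Ω(ε)`. -/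
def Connected {m n : ℕ} (H : Matrix (Fin m) (Fin n) (ZMod 2)) (ε ξ : ℝ)
    (x y : Fin n → ZMod 2) : Prop :=
  ∃ (ℓ : ℕ) (v : ℕ → Fin n → ZMod 2), v 0 = x ∧ v ℓ = y ∧
    (∀ i ≤ ℓ, (hammingNorm (H.mulVec (v i)) : ℝ) < ε * n) ∧
    (∀ i < ℓ, (hammingNorm (v i + v (i + 1)) : ℝ) < ξ * n)

/-!
If `x` and `y` both lie in `Ω(ε)`, then `|H(x ⊕ y)| ≤ |Hx| + |Hy| < 2εn`, so expansion forbids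
`2εn/γ ≤ |x ⊕ y| ≤ δn`: pairs of `Ω(ε)` are either close or far. Along a path of a cluster the
distance to the starting point `x` grows by less than `ξn` per step, and `ξn` is too small to
jump over this gap, so the whole cluster of `x` lies in the Hamming ball of radius `2εn/γ`
around `x`.
-/

open Finset Matrix

section Hamming

variable {ι : Type*} [Fintype ι] [DecidableEq ι]

theorem hammingNorm_add_le {β : ι → Type*} [∀ i, AddZeroClass (β i)] [∀ i, DecidableEq (β i)]
    (x y : ∀ i, β i) : hammingNorm (x + y) ≤ hammingNorm x + hammingNorm y := by
  refine (card_le_card fun i hi => ?_).trans (card_union_le _ _)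
  simp only [mem_filter, mem_univ, true_and, mem_union, Pi.add_apply] at hi ⊢
  by_contra! h
  simp [h.1, h.2] at hi

theorem card_filter_hammingDist_le_eq {β : Type*} [AddGroup β] [Fintype β] [DecidableEq β]
    (x : ι → β) (r : ℕ) :
    #{y | hammingDist x y ≤ r} = #{z : ι → β | hammingNorm z ≤ r} :=
  card_nbij' (-x + ·) (x + ·) (fun y hy => by simpa [hammingDist_eq_hammingNorm] using hy)
    (fun z hz => by simpa [hammingDist_eq_hammingNorm] using hz) (fun y _ => by simp)
    (fun z _ => by simp)

namespace ZMod

omit [DecidableEq ι] in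
theorem hammingNorm_add_eq_hammingDist (x y : ι → ZMod 2) :
    hammingNorm (x + y) = hammingDist x y := by
  rw [hammingDist_eq_hammingNorm]
  congr 1
  funext j
  simp [neg_eq_self_mod_two]

theorem card_filter_hammingNorm_eq (i : ℕ) :
    #{z : ι → ZMod 2 | hammingNorm z = i} = (Fintype.card ι).choose i := by
  rw [← card_univ, ← card_powersetCard]
  refine card_nbij' (fun z => ({j | z j ≠ 0} : Finset ι)) (fun s j => if j ∈ s then 1 else 0)
    ?_ ?_ ?_ ?_
  · intro z hz
    simpa [mem_powersetCard, hammingNorm] using hz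
  · intro s hs
    simpa [mem_powersetCard, hammingNorm] using hs
  · intro z _
    funext j
    by_cases h : z j = 0
    · simp [h]
    · simp only [ne_eq, mem_filter, mem_univ, h, not_false_eq_true, and_self, if_true]
      exact (Fin.eq_one_of_ne_zero (z j) h).symm
  · intro s _
    ext j
    by_cases h : j ∈ s <;> simp [h]

theorem card_filter_hammingNorm_le (r : ℕ) :
    #{z : ι → ZMod 2 | hammingNorm z ≤ r} = ∑ i ∈ range (r + 1), (Fintype.card ι).choose i := by
  rw [card_eq_sum_card_fiberwise (f := hammingNorm) (t := range (r + 1))]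
  · refine sum_congr rfl fun i hi => ?_
    rw [filter_filter, ← card_filter_hammingNorm_eq]
    refine congrArg Finset.card (filter_congr fun z _ => and_iff_right_of_imp ?_)
    rintro rfl
    exact Nat.le_of_lt_succ (mem_range.1 hi)
  · intro z hz
    simpa [Nat.lt_succ_iff] using hz

end ZMod

end Hamming

section Expansion

variable {m n : ℕ} {H : Matrix (Fin m) (Fin n) (ZMod 2)} {δ γ ε ξ : ℝ}

theorem IsExpanding.hammingDist_lt_of_le (hexp : IsExpanding H δ γ) (hγ : 0 < γ)
    {x y : Fin n → ZMod 2} (hx : (hammingNorm (H *ᵥ x) : ℝ) < ε * n)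
    (hy : (hammingNorm (H *ᵥ y) : ℝ) < ε * n) (hxy : (hammingDist x y : ℝ) ≤ δ * n) :
    (hammingDist x y : ℝ) < 2 * ε * n / γ := by
  rw [← ZMod.hammingNorm_add_eq_hammingDist] at hxy ⊢
  have hH : (hammingNorm (H *ᵥ (x + y)) : ℝ) ≤ hammingNorm (H *ᵥ x) + hammingNorm (H *ᵥ y) := by
    rw [mulVec_add]
    exact_mod_cast hammingNorm_add_le _ _
  rw [lt_div_iff₀ hγ]
  linarith [hexp _ hxy]

theorem Connected.hammingDist_le (hexp : IsExpanding H δ γ) (hγ : 0 < γ)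
    (hξ : ξ < (δ - 2 * ε / γ) / 2) {x y : Fin n → ZMod 2} (hxy : Connected H ε ξ x y) :
    (hammingDist x y : ℝ) ≤ 2 * ε * n / γ := by
  obtain ⟨ℓ, v, rfl, rfl, hΩ, hstep⟩ := hxy
  suffices ∀ i ≤ ℓ, (hammingDist (v 0) (v i) : ℝ) ≤ 2 * ε * n / γ from this ℓ le_rfl
  intro i
  induction i with
  | zero =>
    intro _
    have hεn : 0 < ε * n := (Nat.cast_nonneg _).trans_lt (hΩ 0 (Nat.zero_le _))
    rw [hammingDist_self, Nat.cast_zero, mul_assoc]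
    exact div_nonneg (by linarith) hγ.le
  | succ i ih =>
    intro hi
    have hprev := ih (by omega)
    have hjump : (hammingDist (v i) (v (i + 1)) : ℝ) < ξ * n := by
      rw [← ZMod.hammingNorm_add_eq_hammingDist]
      exact hstep i hi
    refine (hexp.hammingDist_lt_of_le hγ (hΩ 0 (Nat.zero_le _)) (hΩ (i + 1) hi) ?_).le
    have hn : (0 : ℝ) ≤ n := Nat.cast_nonneg n
    calc (hammingDist (v 0) (v (i + 1)) : ℝ)
        ≤ hammingDist (v 0) (v i) + hammingDist (v i) (v (i + 1)) := by
          exact_mod_cast hammingDist_triangle _ _ _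
      _ ≤ δ * n := by
          -- a step exists, so `0 < ξn`, and then `hξ` gives `2εn/γ + ξn ≤ δn`
          have hξn : 0 < ξ * n := (Nat.cast_nonneg _).trans_lt hjump
          linarith [mul_nonneg (sub_pos.2 hξ).le hn, mul_div_right_comm (2 * ε) (n : ℝ) γ]

end Expansion

theorem cluster_cardinality_bound_general {m n : ℕ} (H : Matrix (Fin m) (Fin n) (ZMod 2))
    (δ γ ε ξ : ℝ) (hγ : 0 < γ) (hexp : IsExpanding H δ γ)
    (hξ : ξ < (δ - 2 * ε / γ) / 2)
    (x : Fin n → ZMod 2) :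
    (Finset.univ.filter (fun y : Fin n → ZMod 2 => Connected H ε ξ x y)).card
      ≤ ∑ i ∈ Finset.range (⌊2 * ε * (n : ℝ) / γ⌋₊ + 1), Nat.choose n i := by
  calc #{y | Connected H ε ξ x y}
      ≤ #{y | hammingDist x y ≤ ⌊2 * ε * (n : ℝ) / γ⌋₊} :=
        card_le_card fun y hy => mem_filter.2
          ⟨mem_univ y, Nat.le_floor ((mem_filter.1 hy).2.hammingDist_le hexp hγ hξ)⟩
    _ = _ := by
      rw [card_filter_hammingDist_le_eq, ZMod.card_filter_hammingNorm_le, Fintype.card_fin]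

/-- for `(δ,γ)`-expanding `H`, `0 < ε < δγ/2` and
`0 < ξ < (δ − 2ε/γ)/2`, every ξ-cluster of `Ω(ε)` has cardinality at most the
volume `Σ_{i=0}^{⌊2εn/γ⌋} C(n,i)` of a Hamming ball of radius `⌊2εn/γ⌋`. -/
theorem cluster_cardinality_bound {m n : ℕ} (H : Matrix (Fin m) (Fin n) (ZMod 2))
    (δ γ ε ξ : ℝ) (hδ : 0 < δ) (hγ : 0 < γ) (hexp : IsExpanding H δ γ)
    (hε0 : 0 < ε) (hε : ε < δ * γ / 2)
    (hξ0 : 0 < ξ) (hξ : ξ < (δ - 2 * ε / γ) / 2)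
    (x : Fin n → ZMod 2) (hx : (hammingNorm (H.mulVec x) : ℝ) < ε * n) :
    (Finset.univ.filter (fun y : Fin n → ZMod 2 => Connected H ε ξ x y)).card
      ≤ ∑ i ∈ Finset.range (⌊2 * ε * (n : ℝ) / γ⌋₊ + 1), Nat.choose n i :=
  cluster_cardinality_bound_general H δ γ ε ξ hγ hexp hξ x
end

section
/- Let H ∈ F₂^{m×n} have rank m over F₂ and be (δ,γ)-expanding, let 0 < ε < δγ/2 and 0 < ξ < (δ − 2ε/γ)/2. Then for every ξ-cluster C of Ω(ε), the ratio of the total number of low-energy states to the cluster size satisfies |Ω(ε)| / |C| ≥ 2^{n−m} · (Σ_{0 ≤ i < εn} binom(m,i)) / (Σ_{i=0}^{⌊2εn/γ⌋} binom(n,i)). In particular the configurational min-entropy of the cluster decomposition, (1/n)·log₂(|Ω(ε)|/max_j |C_j|), is bounded below by (1/n)·log₂ of this ratio. -/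
open scoped Classical

/-!
Since `H` has full rank, `y ↦ Hy` is onto `F₂ᵐ` with fibres of size `2^(n-m)`, so
`|Ω(ε)| = 2^(n-m) · #{s ∈ F₂ᵐ : |s| < εn}`. A cluster, on the other hand, is small: for
`x, y ∈ Ω(ε)` with `|x ⊕ y| ≤ δn`, expansion gives `γ|x ⊕ y| ≤ |Hx| + |Hy| < 2εn`. As
`2εn/γ + ξn ≤ δn`, one `ξ`-step from a state within `2εn/γ` of `x` lands within `δn` of `x`,
hence again within `2εn/γ`; so the whole cluster of `x` lies in the Hamming ball of radius
`2εn/γ` around `x`.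
-/

open Finset Matrix

section Hamming

variable {ι : Type*} [Fintype ι]

lemma card_filter_hammingNorm_eq_choose [DecidableEq ι] (i : ℕ) :
    #{y : ι → ZMod 2 | hammingNorm y = i} = (Fintype.card ι).choose i := by
  rw [← card_univ, ← card_powersetCard]
  refine card_nbij' (fun y => ({j | y j ≠ 0} : Finset ι)) (fun A j => if j ∈ A then 1 else 0)
    ?_ ?_ ?_ ?_
  · intro y hy
    simpa [mem_powersetCard, hammingNorm] using hy
  · intro A hA
    simp only [mem_coe, mem_powersetCard] at hA
    simp only [coe_filter, mem_univ, true_and, Set.mem_ofPred_eq, hammingNorm, ← hA.2]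
    congr 1
    ext j
    by_cases h : j ∈ A <;> simp [h]
  · intro y _
    funext j
    rcases (by decide : ∀ b : ZMod 2, b = 0 ∨ b = 1) (y j) with h | h <;> simp [h]
  · intro A _
    ext j
    by_cases h : j ∈ A <;> simp [h]

lemma card_filter_hammingNorm [DecidableEq ι] (P : ℕ → Prop) [DecidablePred P] :
    #{y : ι → ZMod 2 | P (hammingNorm y)}
      = ∑ i ∈ range (Fintype.card ι + 1) with P i, (Fintype.card ι).choose i := by
  rw [card_eq_sum_card_fiberwise (f := hammingNorm) (t := {i ∈ range (Fintype.card ι + 1) | P i})]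
  · refine sum_congr rfl fun i hi => ?_
    rw [← card_filter_hammingNorm_eq_choose, filter_filter]
    congr 1
    ext y
    simp only [mem_filter, mem_univ, true_and, and_iff_right_iff_imp]
    exact fun hy => hy ▸ (mem_filter.mp hi).2
  · intro y hy
    simp only [coe_filter, mem_univ, true_and, Set.mem_ofPred_eq, mem_range] at hy ⊢
    exact ⟨Nat.lt_succ_of_le hammingNorm_le_card_fintype, hy⟩

lemma hammingNorm_add_eq_hammingDist (a b : ι → ZMod 2) :
    hammingNorm (a + b) = hammingDist a b := by
  rw [hammingDist_eq_hammingNorm, show -a = a from funext fun j => ZMod.neg_eq_self_mod_two _]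

lemma card_filter_hammingDist_le [DecidableEq ι] (x : ι → ZMod 2) (R : ℕ) :
    #{y | hammingDist y x ≤ R} ≤ ∑ i ∈ range (R + 1), (Fintype.card ι).choose i := by
  calc #{y | hammingDist y x ≤ R} = #{y : ι → ZMod 2 | hammingNorm y ≤ R} :=
        card_equiv (Equiv.addRight x) fun y => by simp [hammingNorm_add_eq_hammingDist]
    _ = ∑ i ∈ range (Fintype.card ι + 1) with i ≤ R, (Fintype.card ι).choose i :=
        card_filter_hammingNorm (· ≤ R)
    _ ≤ _ := sum_le_sum_of_subset fun i hi => by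
        simp only [mem_filter, mem_range] at hi ⊢; omega

lemma hammingDist_le_hammingNorm_add {β : ι → Type*} [∀ i, DecidableEq (β i)] [∀ i, Zero (β i)]
    (a b : ∀ i, β i) :
    hammingDist a b ≤ hammingNorm a + hammingNorm b := by
  simpa only [hammingDist_zero_right, hammingDist_zero_left] using hammingDist_triangle a 0 b

end Hamming

lemma AddMonoidHom.card_filter_comp_of_surjective {G M : Type*} [AddGroup G] [Fintype G]
    [AddGroup M] [Fintype M] [DecidableEq M] (f : G →+ M) (hf : Function.Surjective f)
    (P : M → Prop) [DecidablePred P] :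
    #{g | P (f g)} = #{g | f g = 0} * #{y | P y} := by
  rw [card_eq_sum_card_fiberwise (f := f) (t := {y | P y}) (fun g hg => by simpa using hg),
    mul_comm, ← smul_eq_mul, ← sum_const]
  refine sum_congr rfl fun y hy => ?_
  rw [← AddMonoidHom.card_fiber_eq_of_mem_range f (hf y) (hf 0), filter_filter]
  congr 1
  ext g
  simp only [mem_filter, mem_univ, true_and] at hy ⊢
  exact ⟨And.right, fun h => ⟨h ▸ hy, h⟩⟩

namespace Matrix

variable {m n K : Type*} [Fintype m] [Fintype n] [Field K]

lemma mulVec_surjective_of_rank_eq (H : Matrix m n K) (hrank : H.rank = Fintype.card m) :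
    Function.Surjective H.mulVec := by
  have hrange : LinearMap.range H.mulVecLin = ⊤ := by
    apply Submodule.eq_top_of_finrank_eq
    rw [← rank, hrank, Module.finrank_fintype_fun_eq_card]
  exact LinearMap.range_eq_top.mp hrange

lemma card_filter_mulVec_eq_zero [DecidableEq n] [Fintype K] (H : Matrix m n K) :
    #{y | H *ᵥ y = 0} = Fintype.card K ^ (Fintype.card n - H.rank) := by
  have hker : #{y | H *ᵥ y = 0} = Fintype.card (LinearMap.ker H.mulVecLin) := by
    rw [Fintype.card_subtype]; simp [LinearMap.mem_ker]
  have hnullity := LinearMap.finrank_range_add_finrank_ker H.mulVecLin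
  rw [Module.finrank_fintype_fun_eq_card, ← rank] at hnullity
  rw [hker, Module.card_eq_pow_finrank (K := K)]
  congr 1
  omega

lemma card_filter_comp_mulVec_of_rank_eq [DecidableEq m] [DecidableEq n] [Fintype K]
    (H : Matrix m n K) (hrank : H.rank = Fintype.card m) (P : (m → K) → Prop) [DecidablePred P] :
    #{y | P (H *ᵥ y)} = Fintype.card K ^ (Fintype.card n - Fintype.card m) * #{s | P s} := by
  rw [← hrank, ← card_filter_mulVec_eq_zero]
  convert H.mulVecLin.toAddMonoidHom.card_filter_comp_of_surjective
    (H.mulVec_surjective_of_rank_eq hrank) P using 4 <;> rfl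

end Matrix

section

variable {m n : ℕ} {H : Matrix (Fin m) (Fin n) (ZMod 2)} {δ γ ε ξ : ℝ}
  {x y : Fin n → ZMod 2}

lemma IsExpanding.hammingDist_lt (hexp : IsExpanding H δ γ) (hγ : 0 < γ)
    (hx : (hammingNorm (H *ᵥ x) : ℝ) < ε * n) (hy : (hammingNorm (H *ᵥ y) : ℝ) < ε * n)
    (hyx : (hammingDist y x : ℝ) ≤ δ * n) :
    (hammingDist y x : ℝ) < 2 * ε * n / γ := by
  have hexpand := hexp (y + x) (by rwa [hammingNorm_add_eq_hammingDist])
  rw [Matrix.mulVec_add, hammingNorm_add_eq_hammingDist, hammingNorm_add_eq_hammingDist]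
    at hexpand
  have htri : (hammingDist (H *ᵥ y) (H *ᵥ x) : ℝ)
      ≤ hammingNorm (H *ᵥ y) + hammingNorm (H *ᵥ x) := by
    exact_mod_cast hammingDist_le_hammingNorm_add _ _
  rw [lt_div_iff₀ hγ]
  linarith

lemma connected_refl (hx : (hammingNorm (H *ᵥ x) : ℝ) < ε * n) : Connected H ε ξ x x :=
  ⟨0, fun _ => x, rfl, rfl, fun _ _ => hx, fun _ hi => absurd hi (Nat.not_lt_zero _)⟩

lemma Connected.hammingDist_lt (hxy : Connected H ε ξ x y) (hexp : IsExpanding H δ γ)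
    (hγ : 0 < γ) (hgap : 2 * ε / γ + ξ ≤ δ) (hx : (hammingNorm (H *ᵥ x) : ℝ) < ε * n) :
    (hammingDist y x : ℝ) < 2 * ε * n / γ := by
  obtain ⟨ℓ, v, rfl, rfl, hΩ, hstep⟩ := hxy
  have hgap_n : 2 * ε * n / γ + ξ * n ≤ δ * n := by
    rw [mul_div_right_comm, ← add_mul]
    exact mul_le_mul_of_nonneg_right hgap (Nat.cast_nonneg n)
  suffices ∀ i ≤ ℓ, (hammingDist (v i) (v 0) : ℝ) < 2 * ε * n / γ from this ℓ le_rfl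
  intro i
  induction i with
  | zero =>
    intro _
    have hεn : 0 < ε * n := (Nat.cast_nonneg _).trans_lt hx
    rw [hammingDist_self, Nat.cast_zero, mul_assoc]
    exact div_pos (by linarith) hγ
  | succ i ih =>
    intro hi
    refine hexp.hammingDist_lt hγ (hΩ 0 (Nat.zero_le _)) (hΩ (i + 1) hi) ?_
    have hprev := ih (Nat.le_of_succ_le hi)
    have hjump := hstep i hi
    rw [hammingNorm_add_eq_hammingDist, hammingDist_comm] at hjump
    have htri : (hammingDist (v (i + 1)) (v 0) : ℝ)
        ≤ hammingDist (v (i + 1)) (v i) + hammingDist (v i) (v 0) := by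
      exact_mod_cast hammingDist_triangle _ _ _
    linarith

end

theorem cluster_min_entropy_bound_general {m n : ℕ} (H : Matrix (Fin m) (Fin n) (ZMod 2))
    (hrank : H.rank = m)
    (δ γ ε ξ : ℝ) (hγ : 0 < γ) (hexp : IsExpanding H δ γ)
    (hξ0 : 0 < ξ) (hξ : ξ < (δ - 2 * ε / γ) / 2)
    (x : Fin n → ZMod 2) (hx : (hammingNorm (H.mulVec x) : ℝ) < ε * n) :
    (2 : ℝ) ^ (n - m) *
        (∑ i ∈ (Finset.range (m + 1)).filter (fun i : ℕ => (i : ℝ) < ε * n),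
          (Nat.choose m i : ℝ)) /
        (∑ i ∈ Finset.range (⌊2 * ε * (n : ℝ) / γ⌋₊ + 1), (Nat.choose n i : ℝ))
      ≤ ((Finset.univ.filter
            (fun y : Fin n → ZMod 2 => (hammingNorm (H.mulVec y) : ℝ) < ε * n)).card : ℝ) /
          ((Finset.univ.filter (fun y : Fin n → ZMod 2 => Connected H ε ξ x y)).card : ℝ) := by
  set R := ⌊2 * ε * (n : ℝ) / γ⌋₊
  have hgap : 2 * ε / γ + ξ ≤ δ := by linarith
  have hΩ : #{y : Fin n → ZMod 2 | (hammingNorm (H *ᵥ y) : ℝ) < ε * n}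
      = 2 ^ (n - m) * ∑ i ∈ (range (m + 1)).filter (fun i : ℕ => (i : ℝ) < ε * n),
          m.choose i := by
    have hcount := H.card_filter_comp_mulVec_of_rank_eq (by simpa using hrank)
      (fun s => (hammingNorm s : ℝ) < ε * n)
    rw [card_filter_hammingNorm (fun i => (i : ℝ) < ε * n)] at hcount
    simpa using hcount
  have hC : #{y | Connected H ε ξ x y} ≤ ∑ i ∈ range (R + 1), n.choose i := by
    refine (card_le_card fun y hy => ?_).trans (by simpa using card_filter_hammingDist_le x R)
    simp only [mem_filter, mem_univ, true_and] at hy ⊢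
    exact Nat.le_floor (hy.hammingDist_lt hexp hγ hgap hx).le
  have hC_pos : 0 < #{y | Connected H ε ξ x y} :=
    card_pos.mpr ⟨x, by simpa using connected_refl hx⟩
  rw [hΩ]
  push_cast
  exact div_le_div_of_nonneg_left (by positivity) (Nat.cast_pos.mpr hC_pos) (by exact_mod_cast hC)

/-- for `H` of full rank `m` that is `(δ,γ)`-expanding, with
`0 < ε < δγ/2` and `0 < ξ < (δ − 2ε/γ)/2`, the ratio `|Ω(ε)|/|C|` for any
ξ-cluster `C` of `Ω(ε)` is at least
`2^{n−m} · (Σ_{0 ≤ i < εn} C(m,i)) / (Σ_{i=0}^{⌊2εn/γ⌋} C(n,i))`; this lower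
bounds the configurational min-entropy of the cluster decomposition. -/
theorem cluster_min_entropy_bound {m n : ℕ} (H : Matrix (Fin m) (Fin n) (ZMod 2))
    (hrank : H.rank = m)
    (δ γ ε ξ : ℝ) (hδ : 0 < δ) (hγ : 0 < γ) (hexp : IsExpanding H δ γ)
    (hε0 : 0 < ε) (hε : ε < δ * γ / 2)
    (hξ0 : 0 < ξ) (hξ : ξ < (δ - 2 * ε / γ) / 2)
    (x : Fin n → ZMod 2) (hx : (hammingNorm (H.mulVec x) : ℝ) < ε * n) :
    (2 : ℝ) ^ (n - m) *
        (∑ i ∈ (Finset.range (m + 1)).filter (fun i : ℕ => (i : ℝ) < ε * n),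
          (Nat.choose m i : ℝ)) /
        (∑ i ∈ Finset.range (⌊2 * ε * (n : ℝ) / γ⌋₊ + 1), (Nat.choose n i : ℝ))
      ≤ ((Finset.univ.filter
            (fun y : Fin n → ZMod 2 => (hammingNorm (H.mulVec y) : ℝ) < ε * n)).card : ℝ) /
          ((Finset.univ.filter (fun y : Fin n → ZMod 2 => Connected H ε ξ x y)).card : ℝ) :=
  cluster_min_entropy_bound_general H hrank δ γ ε ξ hγ hexp hξ0 hξ x hx
end
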